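/- arXiv:2205.15498 — 5 statements merged into one kernel-verified Lean document; each statement's English description precedes it below -/
import Mathlib

section
/- Let p be a prime with p ≡ 5 (mod 24) and let a ∈ {1,−1}. Then the ternary self-dual code NV^(a)(p) of length 2(p+1) contains 2(p+1) distinct codewords, each of weight 2(p+1), such that the 2(p+1) × 2(p+1) integer matrix whose rows are these codewords (identifying the elements 0, 1, 2 of 𝔽₃ with the integers 0, 1, −1) is a Hadamard matrix of order 2(p+1). -/
open Matrix

/-- Entry `χ(c)` where `b - a = c²` is a nonzero square (value `1` if `c` can be chosen a
square, i.e. `b - a` is a nonzero fourth power, `-1` if `b - a` is a nonzero square that is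
not a fourth power, and `0` otherwise). -/
def RX (p : ℕ) [NeZero p] : Matrix (ZMod p) (ZMod p) ℤ :=
  Matrix.of fun a b =>
    if ∃ c : ZMod p, c ≠ 0 ∧ c ^ 2 = b - a ∧ ∃ d : ZMod p, d ^ 2 = c then 1
    else if ∃ c : ZMod p, c ≠ 0 ∧ c ^ 2 = b - a then -1
    else 0

def RY (p : ℕ) [NeZero p] : Matrix (ZMod p) (ZMod p) ℤ :=
  Matrix.of fun a b =>
    if ∃ c : ZMod p, c ≠ 0 ∧ c ^ 2 = 2 * (b - a) ∧ ∃ d : ZMod p, d ^ 2 = c then 1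
    else if ∃ c : ZMod p, c ≠ 0 ∧ c ^ 2 = 2 * (b - a) then -1
    else 0

def Xmat (p : ℕ) [NeZero p] : Matrix (Option (ZMod p)) (Option (ZMod p)) ℤ :=
  Matrix.of fun i j =>
    match i, j with
    | none, none => 0
    | none, some _ => 1
    | some _, none => -1
    | some a, some b => RX p a b

def Ymat (p : ℕ) [NeZero p] : Matrix (Option (ZMod p)) (Option (ZMod p)) ℤ :=
  Matrix.of fun i j =>
    match i, j with
    | none, _ => 0
    | some _, none => 0
    | some a, some b => RY p a b

/-- Index set of the length `2(p+1)` code. -/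
abbrev NVIdx (p : ℕ) := Option (ZMod p) ⊕ Option (ZMod p)

def Bw (p : ℕ) [NeZero p] : Matrix (NVIdx p) (NVIdx p) ℤ :=
  Matrix.fromBlocks (Xmat p) (Ymat p) (-(Ymat p)ᵀ) (Xmat p)ᵀ

/-- Generator matrix `a I + B_w` (over `ℤ`). -/
def NVgen (p : ℕ) [NeZero p] (a : ℤ) : Matrix (NVIdx p) (NVIdx p) ℤ :=
  a • (1 : Matrix (NVIdx p) (NVIdx p) ℤ) + Bw p

/-- The ternary code `NV^(a)(p)`: the row space over `𝔽₃` of `a I + B_w` reduced mod 3. -/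
def NVcode (p : ℕ) [NeZero p] (a : ℤ) : Submodule (ZMod 3) (NVIdx p → ZMod 3) :=
  Submodule.span (ZMod 3) (Set.range fun i => ((NVgen p a).map (Int.cast : ℤ → ZMod 3)) i)

/-- The matrix `H_{NV^(a)(p)}`. -/
def Hnv (p : ℕ) [NeZero p] (a : ℤ) : Matrix (NVIdx p) (NVIdx p) ℤ :=
  Matrix.fromBlocks
    (Xmat p - (Ymat p)ᵀ + a • 1) (Ymat p + (Xmat p)ᵀ + a • 1)
    (-(Ymat p)ᵀ - Xmat p - a • 1) ((Xmat p)ᵀ - Ymat p + a • 1)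

/-- Weight of a ternary vector: the number of nonzero coordinates. -/
def wt {ι : Type*} [Fintype ι] (v : ι → ZMod 3) : ℕ :=
  (Finset.univ.filter fun i => v i ≠ 0).card

/-- `H` is a Hadamard matrix of order `n`. -/
def IsHadamard {ι : Type*} [Fintype ι] [DecidableEq ι] (n : ℕ) (H : Matrix ι ι ℤ) : Prop :=
  (∀ i j, H i j = 1 ∨ H i j = -1) ∧ H * Hᵀ = (n : ℤ) • (1 : Matrix ι ι ℤ)

/-- The identification `0 ↦ 0`, `1 ↦ 1`, `2 ↦ -1` of `𝔽₃` with `{0, 1, -1} ⊆ ℤ`. -/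
def rho (x : ZMod 3) : ℤ := if x = 0 then 0 else if x = 1 then 1 else -1

/-!
Let `χ : 𝔽_p → ℤ[i]` be the quartic residue character: `χ x ∈ {0, ±1, ±i}` maps to
`x ^ ((p - 1) / 4)` under `i ↦ √-1 (mod p)`. A nonzero square is a fourth power iff `χ` is `1`
on it, so `R_X` and `R_Y` have entries `Re χ (b - a)` and `Re χ (2 (b - a))`. For
`p ≡ 5 (mod 8)` we have `χ (-1) = -1` and, as `2` is a nonsquare, `χ 2 = ±i`; hence
`Re χ t Re χ u + Re χ (2t) Re χ (2u) = Re (χ t χ̄ u)`, and summing over `t + u = s` gives the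
Jacobi sum `J(χ, χ̄) = -χ (-1) = 1` (or `1 - p` if `s = 0`). So `R_X² + R_Y² = J - p I`, and
the bordered matrices satisfy `Xᵀ = -X`, `Yᵀ = -Y`, `X Y = Y X` and `X² + Y² = -p I`.

With `A = X + Y` and `B = Y - X`, the matrix `H = [[A + a, B + a], [B - a, -A + a]]` then has
`H Hᵀ = 2 (p + 1) I`, and `χ 2 = ±i` also makes exactly one of `Re χ x`, `Re χ (2x)` nonzero,
so the entries of `H` are `±1`. The rows of `H` are sums and differences of rows of
`a I + B_w`, so they reduce mod 3 to codewords of full weight.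
-/

theorem pow_four_eq_one_iff_of_mul_self_eq_neg_one {R : Type*} [CommRing R] [IsDomain R]
    {w : R} (hw : w * w = -1) {z : R} :
    z ^ 4 = 1 ↔ z = 1 ∨ z = -1 ∨ z = w ∨ z = -w := by
  constructor
  · intro h
    have : (z - 1) * (z + 1) * ((z - w) * (z + w)) = 0 := by
      linear_combination h - (z ^ 2 - 1) * hw
    rcases mul_eq_zero.1 this with h | h <;> rcases mul_eq_zero.1 h with h | h
    · exact Or.inl (by linear_combination h)
    · exact Or.inr (Or.inl (by linear_combination h))
    · exact Or.inr (Or.inr (Or.inl (by linear_combination h)))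
    · exact Or.inr (Or.inr (Or.inr (by linear_combination h)))
  · rintro (h | h | h | h) <;> rw [h]
    · ring
    · ring
    · linear_combination (w * w - 1) * hw
    · linear_combination (w * w - 1) * hw

theorem Zsqrtd.re_sum {d : ℤ} {ι : Type*} (s : Finset ι) (f : ι → ℤ√d) :
    (∑ i ∈ s, f i).re = ∑ i ∈ s, (f i).re :=
  map_sum (AddMonoidHom.mk' Zsqrtd.re Zsqrtd.re_add) f s

theorem GaussianInt.pow_four_eq_one_iff {g : GaussianInt} :
    g ^ 4 = 1 ↔ g = 1 ∨ g = -1 ∨ g = Zsqrtd.sqrtd ∨ g = -Zsqrtd.sqrtd :=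
  pow_four_eq_one_iff_of_mul_self_eq_neg_one (by rw [Zsqrtd.dmuld]; simp)

theorem GaussianInt.eq_one_or_neg_one_or_sqrtd_or_neg_sqrtd_of_isUnit {z : GaussianInt}
    (hz : IsUnit z) : z = 1 ∨ z = -1 ∨ z = Zsqrtd.sqrtd ∨ z = -Zsqrtd.sqrtd := by
  have hnorm := (Zsqrtd.norm_eq_one_iff' (by norm_num) z).2 hz
  obtain ⟨a, b⟩ := z
  simp only [Zsqrtd.norm_def, neg_one_mul] at hnorm
  obtain ⟨ha1, ha2⟩ : -1 ≤ a ∧ a ≤ 1 := by constructor <;> nlinarith [mul_self_nonneg b]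
  obtain ⟨hb1, hb2⟩ : -1 ≤ b ∧ b ≤ 1 := by constructor <;> nlinarith [mul_self_nonneg a]
  interval_cases a <;> interval_cases b <;> simp_all [Zsqrtd.ext_iff]

theorem GaussianInt.eq_sqrtd_or_eq_neg_sqrtd_of_sq_eq_neg_one {c : GaussianInt}
    (hc : c ^ 2 = -1) : c = Zsqrtd.sqrtd ∨ c = -Zsqrtd.sqrtd :=
  sq_eq_sq_iff_eq_or_eq_neg.1 (by rw [hc, sq, Zsqrtd.dmuld]; rfl)

namespace MulChar

theorem inv_apply_eq_star {R : Type*} [CommMonoid R] (χ : MulChar R GaussianInt) (a : R) :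
    χ⁻¹ a = star (χ a) := by
  by_cases ha : IsUnit a
  · have hnorm : χ a * star (χ a) = 1 := by
      rw [← Zsqrtd.norm_eq_mul_conj, (Zsqrtd.norm_eq_one_iff' (by norm_num) _).2 (ha.map χ),
        Int.cast_one]
    have hinv : χ⁻¹ a * χ a = 1 := by
      rw [← mul_apply, inv_mul, one_apply ha]
    exact left_inv_eq_right_inv hinv hnorm
  · rw [map_nonunit _ ha, map_nonunit _ ha, star_zero]

theorem inv_apply_neg_one {M R : Type*} [CommMonoid M] [HasDistribNeg M] [CommMonoidWithZero R]
    (χ : MulChar M R) : χ⁻¹ (-1) = χ (-1) := by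
  refine left_inv_eq_right_inv (a := χ (-1)) ?_ ?_
  · rw [← mul_apply, inv_mul, one_apply isUnit_one.neg]
  · rw [← map_mul, neg_one_mul, neg_neg, map_one]

theorem sum_mul_inv_apply_sub {F R : Type*} [Field F] [Fintype F] [DecidableEq F] [CommRing R]
    [IsDomain R] {χ : MulChar F R} (hχ : χ ≠ 1) (s : F) :
    ∑ t, χ t * χ⁻¹ (s - t) = if s = 0 then χ (-1) * (Fintype.card F - 1) else -χ (-1) := by
  split_ifs with hs
  · subst hs
    calc ∑ t, χ t * χ⁻¹ (0 - t) = ∑ t, χ⁻¹ (-1) * (χ⁻¹ * χ) t := by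
          refine Finset.sum_congr rfl fun t _ => ?_
          rw [zero_sub, neg_eq_neg_one_mul, map_mul, mul_apply]
          ring
      _ = χ (-1) * (Fintype.card F - 1) := by
          rw [← Finset.mul_sum, inv_mul, sum_one_eq_card_units, Fintype.card_units,
            inv_apply_neg_one, Nat.cast_sub Fintype.card_pos, Nat.cast_one]
  · calc ∑ t, χ t * χ⁻¹ (s - t) = ∑ u, χ (s * u) * χ⁻¹ (s - s * u) :=
          (Equiv.sum_comp (Equiv.mulLeft₀ s hs) _).symm
      _ = ∑ u, (χ⁻¹ * χ) s * (χ u * χ⁻¹ (1 - u)) := by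
          refine Finset.sum_congr rfl fun u _ => ?_
          rw [← mul_one_sub, map_mul, map_mul, mul_apply]
          ring
      _ = -χ (-1) := by
          rw [← Finset.mul_sum, inv_mul, one_apply (Ne.isUnit hs), one_mul,
            ← jacobiSum_nontrivial_inv hχ, jacobiSum]

variable {F : Type*} [Field F] {χ : MulChar F GaussianInt}

-- Since `χ 2 = ±i`, the second product is `(χ t).im * (χ u).im`.
theorem re_mul_re_add_re_mul_re (hχ2 : χ 2 ^ 2 = -1) (t u : F) :
    (χ t).re * (χ u).re + (χ (2 * t)).re * (χ (2 * u)).re = (χ t * χ⁻¹ u).re := by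
  rw [map_mul, map_mul, inv_apply_eq_star]
  rcases GaussianInt.eq_sqrtd_or_eq_neg_sqrtd_of_sq_eq_neg_one hχ2 with h | h <;>
    simp [h]

theorem sum_re_mul_re_add_re_mul_re [Fintype F] [DecidableEq F] (hχ : χ ≠ 1)
    (hχ2 : χ 2 ^ 2 = -1) (hneg : χ (-1) = -1) (s : F) :
    ∑ t, ((χ t).re * (χ (s - t)).re + (χ (2 * t)).re * (χ (2 * (s - t))).re) =
      if s = 0 then 1 - (Fintype.card F : ℤ) else 1 := by
  simp_rw [re_mul_re_add_re_mul_re hχ2, ← Zsqrtd.re_sum, sum_mul_inv_apply_sub hχ, hneg]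
  split_ifs <;> simp

theorem re_apply_neg (hneg : χ (-1) = -1) (x : F) : (χ (-x)).re = -(χ x).re := by
  rw [show -x = -1 * x by ring, map_mul, hneg, neg_one_mul, Zsqrtd.re_neg]

theorem sum_re_apply_mul [Fintype F] (hχ : χ ≠ 1) (k : F) : ∑ x, (χ (k * x)).re = 0 := by
  simp_rw [map_mul, ← Zsqrtd.re_sum, ← Finset.mul_sum, sum_eq_zero_of_ne_one hχ, mul_zero,
    Zsqrtd.re_zero]

theorem re_apply_add_re_apply_two_mul (hχ2 : χ 2 ^ 2 = -1) {x : F} (hx : x ≠ 0) :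
    ((χ x).re + (χ (2 * x)).re = 1 ∨ (χ x).re + (χ (2 * x)).re = -1) ∧
      ((χ (2 * x)).re - (χ x).re = 1 ∨ (χ (2 * x)).re - (χ x).re = -1) := by
  rw [map_mul]
  rcases GaussianInt.eq_sqrtd_or_eq_neg_sqrtd_of_sq_eq_neg_one hχ2 with h | h <;>
    rcases GaussianInt.eq_one_or_neg_one_or_sqrtd_or_neg_sqrtd_of_isUnit (hx.isUnit.map χ) with
      h' | h' | h' | h' <;> simp [h, h']

end MulChar

theorem Matrix.fromBlocks_skew_mul_transpose {n R : Type*} [Fintype n] [DecidableEq n]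
    [CommRing R] {A B : Matrix n n R} (hA : Aᵀ = -A) (hB : Bᵀ = -B) (hAB : A * B = B * A)
    {c : R} (hc : A * A + B * B = c • 1) (t : R) :
    fromBlocks (A + t • 1) (B + t • 1) (B - t • 1) (-A + t • 1) *
      (fromBlocks (A + t • 1) (B + t • 1) (B - t • 1) (-A + t • 1))ᵀ =
      (2 * t ^ 2 - c) • 1 := by
  simp only [fromBlocks_transpose, transpose_add, transpose_sub, transpose_neg, hA, hB,
    transpose_smul, transpose_one, fromBlocks_multiply]
  rw [← fromBlocks_one, fromBlocks_smul, smul_zero]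
  have hAt : A * (t • 1 : Matrix n n R) = t • A := by rw [mul_smul_comm, mul_one]
  have hBt : B * (t • 1 : Matrix n n R) = t • B := by rw [mul_smul_comm, mul_one]
  have htt : (t • 1 : Matrix n n R) * (t • 1) = (t ^ 2) • 1 := by
    rw [smul_mul_smul_comm, one_mul, sq]
  rw [sub_smul, ← hc]
  congr 1 <;>
    simp only [add_mul, mul_add, sub_mul, mul_sub, neg_mul, mul_neg, smul_mul_assoc, one_mul,
      hAt, hBt, htt, hAB] <;>
    module

theorem Matrix.apply_self_eq_zero_of_transpose_eq_neg {n : Type*} {M : Matrix n n ℤ}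
    (hM : Mᵀ = -M) (i : n) : M i i = 0 := by
  have := congrFun₂ hM i i
  rw [transpose_apply, neg_apply] at this
  omega

theorem Matrix.add_smul_one_apply_eq_one_or_neg_one {n : Type*} [DecidableEq n]
    {M : Matrix n n ℤ} (hM : Mᵀ = -M) (hoff : ∀ i j, i ≠ j → M i j = 1 ∨ M i j = -1)
    {s : ℤ} (hs : s = 1 ∨ s = -1) (i j : n) :
    (M + s • 1) i j = 1 ∨ (M + s • 1) i j = -1 := by
  rw [Matrix.add_apply, smul_apply, one_apply, smul_eq_mul]
  split_ifs with h
  · rw [h, apply_self_eq_zero_of_transpose_eq_neg hM, mul_one, zero_add]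
    exact hs
  · rw [mul_zero, add_zero]
    exact hoff i j h

theorem Matrix.mul_apply_mem_span_range {l m n R : Type*} [Fintype m] [CommSemiring R]
    (P : Matrix l m R) (G : Matrix m n R) (i : l) :
    (P * G) i ∈ Submodule.span R (Set.range G) :=
  range_vecMulLinear G ▸ LinearMap.mem_range_self G.vecMulLinear (P i)

theorem IsHadamard.injective {ι : Type*} [Fintype ι] [DecidableEq ι] {n : ℕ}
    {H : Matrix ι ι ℤ} (hH : IsHadamard n H) (hn : n ≠ 0) : Function.Injective H := by
  intro i j hij
  by_contra hne
  have h : (H * Hᵀ) i j = (H * Hᵀ) i i := by simp only [mul_apply, transpose_apply, ← hij]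
  rw [hH.2, Matrix.smul_apply, Matrix.smul_apply, one_apply_ne hne, one_apply_eq, smul_zero,
    smul_eq_mul, mul_one] at h
  omega

theorem rho_intCast {x : ℤ} (hx : x = 1 ∨ x = -1) : rho x = x := by
  rcases hx with rfl | rfl <;> decide

theorem wt_intCast {ι : Type*} [Fintype ι] {v : ι → ℤ} (hv : ∀ i, v i = 1 ∨ v i = -1) :
    wt (fun i => (v i : ZMod 3)) = Fintype.card ι := by
  rw [wt, Finset.filter_true_of_mem fun i _ => ?_, Finset.card_univ]
  rcases hv i with h | h <;> rw [h] <;> decide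

section QuarticResidue

variable {p : ℕ} [Fact p.Prime] (hp : p % 4 = 1)
include hp

theorem exists_sq_eq_and_isSquare_iff {t : ZMod p} :
    (∃ c : ZMod p, c ≠ 0 ∧ c ^ 2 = t ∧ ∃ d : ZMod p, d ^ 2 = c) ↔ t ^ (p / 4) = 1 := by
  constructor
  · rintro ⟨_, hc, rfl, d, rfl⟩
    rw [← pow_mul, ← pow_mul, show 2 * (2 * (p / 4)) = p - 1 by omega]
    exact ZMod.pow_card_sub_one_eq_one (by rintro rfl; simp at hc)
  · intro h
    have ht : t ≠ 0 := by
      rintro rfl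
      rw [zero_pow (by have := (Fact.out : p.Prime).two_le; omega)] at h
      exact zero_ne_one h
    obtain ⟨c, rfl⟩ := (ZMod.euler_criterion p ht).2
      (by rw [show p / 2 = p / 4 * 2 by omega, pow_mul, h, one_pow])
    have hc : c ≠ 0 := by rintro rfl; simp at ht
    obtain ⟨d, rfl⟩ := (ZMod.euler_criterion p hc).2
      (by rwa [show p / 2 = 2 * (p / 4) by omega, pow_mul, sq])
    exact ⟨d * d, hc, sq _, d, sq _⟩

theorem exists_sq_eq_iff {t : ZMod p} :
    (∃ c : ZMod p, c ≠ 0 ∧ c ^ 2 = t) ↔ t ^ (p / 4) = 1 ∨ t ^ (p / 4) = -1 := by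
  constructor
  · rintro ⟨c, hc, rfl⟩
    rw [← pow_mul, show 2 * (p / 4) = p / 2 by omega]
    exact ZMod.pow_div_two_eq_neg_one_or_one p hc
  · intro h
    have h2 : t ^ (p / 2) = 1 := by
      rw [show p / 2 = p / 4 * 2 by omega, pow_mul]
      rcases h with h | h <;> simp [h]
    have ht : t ≠ 0 := by
      rintro rfl
      rw [zero_pow (by have := (Fact.out : p.Prime).two_le; omega)] at h2
      exact zero_ne_one h2
    obtain ⟨c, rfl⟩ := (ZMod.euler_criterion p ht).2 h2
    exact ⟨c, by rintro rfl; simp at ht, sq c⟩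

end QuarticResidue

section QuarticChar

variable {p : ℕ} [Fact p.Prime] {w : ZMod p}

def gaussianIntToZMod (hw : w * w = -1) : GaussianInt →+* ZMod p :=
  Zsqrtd.lift ⟨w, by rw [hw]; simp⟩

@[simp]
theorem gaussianIntToZMod_sqrtd (hw : w * w = -1) : gaussianIntToZMod hw Zsqrtd.sqrtd = w := by
  simp [gaussianIntToZMod]

def quarticValues : Submonoid GaussianInt where
  carrier := {g | g = 0 ∨ g ^ 4 = 1}
  mul_mem' := by
    rintro g h (rfl | hg) (rfl | hh)
    all_goals simp_all [mul_pow]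
  one_mem' := Or.inr (one_pow 4)

theorem zero_mem_quarticValues : (0 : GaussianInt) ∈ quarticValues := Or.inl rfl

theorem neg_one_mem_quarticValues : (-1 : GaussianInt) ∈ quarticValues := Or.inr (by norm_num)

variable (hp : p % 4 = 1) (hw : w * w = -1)
include hp hw

theorem gaussianIntToZMod_eq_one_of_pow_four_eq_one {u : GaussianInt} (hu : u ^ 4 = 1)
    (h1 : gaussianIntToZMod hw u = 1) : u = 1 := by
  have : Fact (2 < p) := ⟨by have := (Fact.out : p.Prime).two_le; omega⟩
  have hne : (-1 : ZMod p) ≠ 1 := ZMod.neg_one_ne_one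
  rcases GaussianInt.pow_four_eq_one_iff.1 hu with rfl | rfl | rfl | rfl
  · rfl
  · exact absurd (by simpa using h1) hne
  · rw [gaussianIntToZMod_sqrtd] at h1
    exact absurd (by rw [← hw, h1, one_mul]) hne.symm
  · rw [map_neg, gaussianIntToZMod_sqrtd, neg_eq_iff_eq_neg] at h1
    exact absurd (by rw [← hw, h1, neg_one_mul, neg_neg]) hne.symm

theorem injOn_gaussianIntToZMod : Set.InjOn (gaussianIntToZMod hw) quarticValues := by
  have pow_ne_zero_of_pow_four {g : GaussianInt} (hg : g ^ 4 = 1) : gaussianIntToZMod hw g ≠ 0 :=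
    fun h0 => by simpa [h0] using congrArg (gaussianIntToZMod hw) hg
  rintro g (rfl | hg) h (rfl | hh) hgh
  · rfl
  · exact absurd (by rw [← hgh, map_zero]) (pow_ne_zero_of_pow_four hh)
  · exact absurd (by rw [hgh, map_zero]) (pow_ne_zero_of_pow_four hg)
  · have hu := gaussianIntToZMod_eq_one_of_pow_four_eq_one hp hw (u := g * h ^ 3)
      (by rw [mul_pow, hg, ← pow_mul, show 3 * 4 = 4 * 3 from rfl, pow_mul, hh, one_pow, one_mul])
      (by rw [map_mul, map_pow, hgh, ← pow_succ', ← map_pow, hh, map_one])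
    calc g = g * h ^ 3 * h := by rw [mul_assoc, ← pow_succ, hh, mul_one]
      _ = h := by rw [hu, one_mul]

theorem pow_div_four_mem_image_gaussianIntToZMod (x : ZMod p) :
    x ^ (p / 4) ∈ gaussianIntToZMod hw '' quarticValues := by
  by_cases hx : x = 0
  · have := (Fact.out : p.Prime).two_le
    exact ⟨0, zero_mem_quarticValues, by rw [hx, map_zero, zero_pow (by omega)]⟩
  have h4 : (x ^ (p / 4)) ^ 4 = 1 := by
    rw [← pow_mul, show p / 4 * 4 = p - 1 by omega, ZMod.pow_card_sub_one_eq_one hx]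
  rcases (pow_four_eq_one_iff_of_mul_self_eq_neg_one hw).1 h4 with h | h | h | h
  · exact ⟨1, Submonoid.one_mem _, by rw [h, map_one]⟩
  · exact ⟨-1, neg_one_mem_quarticValues, by rw [h, map_neg, map_one]⟩
  · exact ⟨Zsqrtd.sqrtd, Or.inr (GaussianInt.pow_four_eq_one_iff.2 (by simp)),
      by rw [h, gaussianIntToZMod_sqrtd]⟩
  · exact ⟨-Zsqrtd.sqrtd, Or.inr (GaussianInt.pow_four_eq_one_iff.2 (by simp)),
      by rw [h, map_neg, gaussianIntToZMod_sqrtd]⟩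

theorem invFunOn_gaussianIntToZMod_eq_iff (x : ZMod p) {g : GaussianInt}
    (hg : g ∈ quarticValues) :
    Function.invFunOn (gaussianIntToZMod hw) quarticValues (x ^ (p / 4)) = g ↔
      gaussianIntToZMod hw g = x ^ (p / 4) := by
  constructor
  · rintro rfl
    exact Function.invFunOn_eq (pow_div_four_mem_image_gaussianIntToZMod hp hw x)
  · intro h
    rw [← h]
    exact (injOn_gaussianIntToZMod hp hw).leftInvOn_invFunOn hg

theorem invFunOn_gaussianIntToZMod_mem (x : ZMod p) :
    Function.invFunOn (gaussianIntToZMod hw) quarticValues (x ^ (p / 4)) ∈ quarticValues :=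
  Function.invFunOn_mem (pow_div_four_mem_image_gaussianIntToZMod hp hw x)

-- `x ^ (p / 4)`, with `p / 4 = (p - 1) / 4`, lies in `{0, ±1, ±w}`; `χ x` is the element of
-- `{0, ±1, ±i}` mapping to it.
noncomputable def quarticChar : MulChar (ZMod p) GaussianInt where
  toFun x := Function.invFunOn (gaussianIntToZMod hw) quarticValues (x ^ (p / 4))
  map_one' := (invFunOn_gaussianIntToZMod_eq_iff hp hw 1 (Submonoid.one_mem _)).2
    (by rw [map_one, one_pow])
  map_mul' x y := by
    refine (invFunOn_gaussianIntToZMod_eq_iff hp hw (x * y) (Submonoid.mul_mem _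
      (invFunOn_gaussianIntToZMod_mem hp hw x) (invFunOn_gaussianIntToZMod_mem hp hw y))).2 ?_
    rw [map_mul, Function.invFunOn_eq (pow_div_four_mem_image_gaussianIntToZMod hp hw x),
      Function.invFunOn_eq (pow_div_four_mem_image_gaussianIntToZMod hp hw y), mul_pow]
  map_nonunit' x hx := by
    have := (Fact.out : p.Prime).two_le
    refine (invFunOn_gaussianIntToZMod_eq_iff hp hw x zero_mem_quarticValues).2 ?_
    have hx0 : x = 0 := by simpa [isUnit_iff_ne_zero] using hx
    rw [hx0, map_zero, zero_pow (by omega)]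

theorem quarticChar_eq_iff (x : ZMod p) {g : GaussianInt} (hg : g ∈ quarticValues) :
    quarticChar hp hw x = g ↔ gaussianIntToZMod hw g = x ^ (p / 4) :=
  invFunOn_gaussianIntToZMod_eq_iff hp hw x hg

theorem quarticChar_mem (x : ZMod p) : quarticChar hp hw x ∈ quarticValues :=
  invFunOn_gaussianIntToZMod_mem hp hw x

theorem quarticChar_neg_one (hp8 : p % 8 = 5) : quarticChar hp hw (-1) = -1 := by
  refine (quarticChar_eq_iff hp hw _ neg_one_mem_quarticValues).2 ?_
  rw [map_neg, map_one, Odd.neg_one_pow ⟨p / 8, by omega⟩]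

theorem quarticChar_two_sq (hp8 : p % 8 = 5) : quarticChar hp hw 2 ^ 2 = -1 := by
  have h2 : (2 : ZMod p) ≠ 0 := Ring.two_ne_zero (by rw [ZMod.ringChar_zmod_n]; omega)
  have hns : ¬IsSquare (2 : ZMod p) := by rw [ZMod.exists_sq_eq_two_iff (by omega)]; omega
  rw [← map_pow, quarticChar_eq_iff hp hw _ neg_one_mem_quarticValues, map_neg, map_one,
    ← pow_mul, show 2 * (p / 4) = p / 2 by omega]
  rcases ZMod.pow_div_two_eq_neg_one_or_one p h2 with h | h
  · exact absurd ((ZMod.euler_criterion p h2).2 h) hns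
  · exact h.symm

theorem quarticChar_ne_one (hp8 : p % 8 = 5) : quarticChar hp hw ≠ 1 := by
  intro h
  have h2 := quarticChar_two_sq hp hw hp8
  rw [h, MulChar.one_apply (Ring.two_ne_zero (by rw [ZMod.ringChar_zmod_n]; omega)).isUnit] at h2
  norm_num at h2

theorem re_quarticChar (t : ZMod p) :
    (quarticChar hp hw t).re =
      if t ^ (p / 4) = 1 then 1 else if t ^ (p / 4) = -1 then -1 else 0 := by
  have hχ {g : GaussianInt} (hg : g ∈ quarticValues) := quarticChar_eq_iff hp hw t hg
  split_ifs with h1 h2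
  · rw [(hχ (Submonoid.one_mem _)).2 (by rw [map_one, h1]), Zsqrtd.re_one]
  · rw [(hχ neg_one_mem_quarticValues).2 (by rw [map_neg, map_one, h2]), Zsqrtd.re_neg,
      Zsqrtd.re_one]
  · rcases quarticChar_mem hp hw t with h | h
    · rw [h, Zsqrtd.re_zero]
    rcases GaussianInt.pow_four_eq_one_iff.1 h with h | h | h | h
    · exact absurd ((hχ (Submonoid.one_mem _)).1 h) (by rw [map_one]; exact Ne.symm h1)
    · exact absurd ((hχ neg_one_mem_quarticValues).1 h)
        (by rw [map_neg, map_one]; exact Ne.symm h2)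
    all_goals simp [h]

theorem ite_exists_sq_eq_eq_re_quarticChar (t : ZMod p) :
    (if ∃ c : ZMod p, c ≠ 0 ∧ c ^ 2 = t ∧ ∃ d : ZMod p, d ^ 2 = c then (1 : ℤ)
      else if ∃ c : ZMod p, c ≠ 0 ∧ c ^ 2 = t then -1 else 0) = (quarticChar hp hw t).re := by
  rw [re_quarticChar hp hw]
  simp only [exists_sq_eq_and_isSquare_iff hp, exists_sq_eq_iff hp]
  split_ifs <;> simp_all

end QuarticChar

theorem exists_mulChar_RX_RY {p : ℕ} [Fact p.Prime] (hp : p % 8 = 5) :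
    ∃ χ : MulChar (ZMod p) GaussianInt, χ ≠ 1 ∧ χ (-1) = -1 ∧ χ 2 ^ 2 = -1 ∧
      (∀ a b, RX p a b = (χ (b - a)).re) ∧ ∀ a b, RY p a b = (χ (2 * (b - a))).re := by
  have hp4 : p % 4 = 1 := by omega
  obtain ⟨w, hw⟩ := (ZMod.exists_sq_eq_neg_one_iff (p := p)).2 (by omega)
  exact ⟨quarticChar hp4 hw.symm, quarticChar_ne_one hp4 hw.symm hp,
    quarticChar_neg_one hp4 hw.symm hp, quarticChar_two_sq hp4 hw.symm hp,
    fun a b => ite_exists_sq_eq_eq_re_quarticChar hp4 hw.symm (b - a),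
    fun a b => ite_exists_sq_eq_eq_re_quarticChar hp4 hw.symm (2 * (b - a))⟩

section NV

variable {p : ℕ} [Fact p.Prime] (hp : p % 8 = 5)
include hp

theorem RX_transpose : (RX p)ᵀ = -RX p := by
  obtain ⟨χ, -, hneg, -, hRX, -⟩ := exists_mulChar_RX_RY hp
  ext a b
  rw [transpose_apply, neg_apply, hRX, hRX, ← neg_sub, MulChar.re_apply_neg hneg]

theorem RY_transpose : (RY p)ᵀ = -RY p := by
  obtain ⟨χ, -, hneg, -, -, hRY⟩ := exists_mulChar_RX_RY hp
  ext a b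
  rw [transpose_apply, neg_apply, hRY, hRY, ← neg_sub, mul_neg, MulChar.re_apply_neg hneg]

theorem RX_mul_RY : RX p * RY p = RY p * RX p := by
  obtain ⟨χ, -, -, -, hRX, hRY⟩ := exists_mulChar_RX_RY hp
  have hX : RX p = (circulant fun s => (χ s).re)ᵀ := by ext a b; exact hRX a b
  have hY : RY p = (circulant fun s => (χ (2 * s)).re)ᵀ := by ext a b; exact hRY a b
  rw [hX, hY, ← transpose_mul, ← transpose_mul, circulant_mul_comm]

theorem RX_mul_RX_add_RY_mul_RY (a b : ZMod p) :
    (RX p * RX p + RY p * RY p) a b = if a = b then 1 - (p : ℤ) else 1 := by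
  obtain ⟨χ, hχ, hneg, hχ2, hRX, hRY⟩ := exists_mulChar_RX_RY hp
  rw [Matrix.add_apply, mul_apply, mul_apply, ← Finset.sum_add_distrib,
    ← Equiv.sum_comp (Equiv.addLeft a)]
  simp only [hRX, hRY, Equiv.coe_addLeft, add_sub_cancel_left, sub_add_eq_sub_sub,
    MulChar.sum_re_mul_re_add_re_mul_re hχ hχ2 hneg, ZMod.card, sub_eq_zero, eq_comm]

theorem sum_RX_row (a : ZMod p) : ∑ c, RX p a c = 0 := by
  obtain ⟨χ, hχ, -, -, hRX, -⟩ := exists_mulChar_RX_RY hp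
  simp only [hRX]
  exact (Equiv.sum_comp (Equiv.subRight a) fun t => (χ t).re).trans
    (by simpa using MulChar.sum_re_apply_mul hχ 1)

theorem sum_RX_col (b : ZMod p) : ∑ c, RX p c b = 0 := by
  obtain ⟨χ, hχ, -, -, hRX, -⟩ := exists_mulChar_RX_RY hp
  simp only [hRX]
  exact (Equiv.sum_comp (Equiv.subLeft b) fun t => (χ t).re).trans
    (by simpa using MulChar.sum_re_apply_mul hχ 1)

theorem sum_RY_row (a : ZMod p) : ∑ c, RY p a c = 0 := by
  obtain ⟨χ, hχ, -, -, -, hRY⟩ := exists_mulChar_RX_RY hp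
  simp only [hRY]
  exact (Equiv.sum_comp (Equiv.subRight a) fun t => (χ (2 * t)).re).trans
    (MulChar.sum_re_apply_mul hχ 2)

theorem sum_RY_col (b : ZMod p) : ∑ c, RY p c b = 0 := by
  obtain ⟨χ, hχ, -, -, -, hRY⟩ := exists_mulChar_RX_RY hp
  simp only [hRY]
  exact (Equiv.sum_comp (Equiv.subLeft b) fun t => (χ (2 * t)).re).trans
    (MulChar.sum_re_apply_mul hχ 2)

theorem Xmat_transpose : (Xmat p)ᵀ = -Xmat p := by
  ext (_ | a) (_ | b) <;>
    simp only [Xmat, transpose_apply, of_apply, Matrix.neg_apply, neg_zero, neg_neg]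
  exact congrFun₂ (RX_transpose hp) a b

theorem Ymat_transpose : (Ymat p)ᵀ = -Ymat p := by
  ext (_ | a) (_ | b) <;> simp only [Ymat, transpose_apply, of_apply, Matrix.neg_apply, neg_zero]
  exact congrFun₂ (RY_transpose hp) a b

theorem Xmat_mul_Ymat : Xmat p * Ymat p = Ymat p * Xmat p := by
  ext (_ | a) (_ | b) <;>
    simp only [Xmat, Ymat, mul_apply, of_apply, Fintype.sum_option, mul_zero, zero_mul, one_mul,
      mul_one, mul_neg, add_zero, zero_add, neg_zero, Finset.sum_const_zero,
      Finset.sum_neg_distrib, sum_RY_row hp, sum_RY_col hp]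
  exact congrFun₂ (RX_mul_RY hp) a b

theorem Xmat_mul_Xmat_add_Ymat_mul_Ymat :
    Xmat p * Xmat p + Ymat p * Ymat p = (-(p : ℤ)) • 1 := by
  ext (_ | a) (_ | b) <;>
    simp only [Xmat, Ymat, Matrix.add_apply, mul_apply, of_apply, Fintype.sum_option, mul_zero,
      zero_mul, one_mul, mul_one, mul_neg, add_zero, zero_add, neg_zero, Finset.sum_const_zero,
      Finset.sum_neg_distrib, Finset.sum_const, Finset.card_univ, ZMod.card, nsmul_eq_mul,
      Matrix.smul_apply, smul_eq_mul, one_apply_eq, one_apply_ne (Option.some_ne_none _),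
      one_apply_ne (Option.some_ne_none _).symm, sum_RX_row hp, sum_RX_col hp]
  rw [add_assoc, ← mul_apply, ← mul_apply, ← Matrix.add_apply, RX_mul_RX_add_RY_mul_RY hp,
    one_apply]
  simp only [Option.some_inj]
  split_ifs <;> ring

theorem RX_add_RY_and_RY_sub_RX_of_ne {a b : ZMod p} (hab : a ≠ b) :
    (RX p a b + RY p a b = 1 ∨ RX p a b + RY p a b = -1) ∧
      (RY p a b - RX p a b = 1 ∨ RY p a b - RX p a b = -1) := by
  obtain ⟨χ, -, -, hχ2, hRX, hRY⟩ := exists_mulChar_RX_RY hp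
  rw [hRX, hRY]
  exact MulChar.re_apply_add_re_apply_two_mul hχ2 (sub_ne_zero.2 hab.symm)

theorem Xmat_add_Ymat_transpose : (Xmat p + Ymat p)ᵀ = -(Xmat p + Ymat p) := by
  rw [transpose_add, Xmat_transpose hp, Ymat_transpose hp, neg_add]

theorem Ymat_sub_Xmat_transpose : (Ymat p - Xmat p)ᵀ = -(Ymat p - Xmat p) := by
  rw [transpose_sub, Xmat_transpose hp, Ymat_transpose hp, neg_sub, sub_neg_eq_add,
    neg_add_eq_sub]

theorem Xmat_add_Ymat_apply_of_ne {i j : Option (ZMod p)} (hij : i ≠ j) :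
    (Xmat p + Ymat p) i j = 1 ∨ (Xmat p + Ymat p) i j = -1 := by
  rcases i with _ | a <;> rcases j with _ | b
  · exact absurd rfl hij
  · simp [Xmat, Ymat]
  · simp [Xmat, Ymat]
  · simpa [Xmat, Ymat] using (RX_add_RY_and_RY_sub_RX_of_ne hp (fun h => hij (congrArg some h))).1

theorem Ymat_sub_Xmat_apply_of_ne {i j : Option (ZMod p)} (hij : i ≠ j) :
    (Ymat p - Xmat p) i j = 1 ∨ (Ymat p - Xmat p) i j = -1 := by
  rcases i with _ | a <;> rcases j with _ | b
  · exact absurd rfl hij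
  · simp [Xmat, Ymat]
  · simp [Xmat, Ymat]
  · simpa [Xmat, Ymat] using (RX_add_RY_and_RY_sub_RX_of_ne hp (fun h => hij (congrArg some h))).2

theorem Hnv_eq_fromBlocks (t : ℤ) :
    Hnv p t = fromBlocks (Xmat p + Ymat p + t • 1) (Ymat p - Xmat p + t • 1)
      (Ymat p - Xmat p - t • 1) (-(Xmat p + Ymat p) + t • 1) := by
  rw [Hnv, Xmat_transpose hp, Ymat_transpose hp]
  congr 1 <;> abel

theorem Hnv_mul_transpose {t : ℤ} (ht : t = 1 ∨ t = -1) :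
    Hnv p t * (Hnv p t)ᵀ = ((2 * (p + 1) : ℕ) : ℤ) • 1 := by
  have hcomm : (Xmat p + Ymat p) * (Ymat p - Xmat p) = (Ymat p - Xmat p) * (Xmat p + Ymat p) := by
    simp only [add_mul, mul_add, sub_mul, mul_sub, Xmat_mul_Ymat hp]
    abel
  have hsq : (Xmat p + Ymat p) * (Xmat p + Ymat p) + (Ymat p - Xmat p) * (Ymat p - Xmat p) =
      (-2 * (p : ℤ)) • 1 := by
    have : (Xmat p + Ymat p) * (Xmat p + Ymat p) + (Ymat p - Xmat p) * (Ymat p - Xmat p) =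
        2 • (Xmat p * Xmat p + Ymat p * Ymat p) := by noncomm_ring
    rw [this, Xmat_mul_Xmat_add_Ymat_mul_Ymat hp, two_nsmul, ← add_smul]
    congr 1
    ring
  rw [Hnv_eq_fromBlocks hp, fromBlocks_skew_mul_transpose (Xmat_add_Ymat_transpose hp)
    (Ymat_sub_Xmat_transpose hp) hcomm hsq]
  congr 1
  push_cast
  rcases ht with rfl | rfl <;> ring

theorem Hnv_apply {t : ℤ} (ht : t = 1 ∨ t = -1) (i j : NVIdx p) :
    Hnv p t i j = 1 ∨ Hnv p t i j = -1 := by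
  have hA := Xmat_add_Ymat_transpose hp
  have hB := Ymat_sub_Xmat_transpose hp
  rw [Hnv_eq_fromBlocks hp]
  rcases i with i | i <;> rcases j with j | j
  · exact add_smul_one_apply_eq_one_or_neg_one hA (fun _ _ => Xmat_add_Ymat_apply_of_ne hp) ht i j
  · exact add_smul_one_apply_eq_one_or_neg_one hB (fun _ _ => Ymat_sub_Xmat_apply_of_ne hp) ht i j
  · rw [fromBlocks_apply₂₁, sub_eq_add_neg, ← neg_smul]
    exact add_smul_one_apply_eq_one_or_neg_one hB (fun _ _ => Ymat_sub_Xmat_apply_of_ne hp)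
      (by omega) i j
  · exact add_smul_one_apply_eq_one_or_neg_one (by rw [transpose_neg, hA])
      (fun _ _ hij => by have := Xmat_add_Ymat_apply_of_ne hp hij; simp only [neg_apply]; omega)
      ht i j

theorem isHadamard_Hnv {t : ℤ} (ht : t = 1 ∨ t = -1) : IsHadamard (2 * (p + 1)) (Hnv p t) :=
  ⟨Hnv_apply hp ht, Hnv_mul_transpose hp ht⟩

end NV

theorem Hnv_eq_mul_NVgen {p : ℕ} [NeZero p] (t : ℤ) :
    Hnv p t = fromBlocks 1 1 (-1) 1 * NVgen p t := by
  rw [NVgen, Bw, ← fromBlocks_one, fromBlocks_smul, fromBlocks_add, fromBlocks_multiply, Hnv]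
  simp only [smul_zero, zero_add, one_mul, neg_one_mul]
  congr 1 <;> abel

theorem Hnv_map_intCast_mem_NVcode {p : ℕ} [NeZero p] (t : ℤ) (i : NVIdx p) :
    (Hnv p t).map (Int.cast : ℤ → ZMod 3) i ∈ NVcode p t := by
  change (Hnv p t).map (Int.castRingHom (ZMod 3)) i ∈ _
  rw [Hnv_eq_mul_NVgen, Matrix.map_mul]
  exact mul_apply_mem_span_range _ _ i

/-- for a prime `p ≡ 5 (mod 24)` and `a ∈ {1, -1}`, the ternary self-dual code
`NV^(a)(p)` of length `2(p+1)` contains `2(p+1)` distinct codewords, each of weight `2(p+1)`,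
whose rows (read in `{0, 1, -1} ⊆ ℤ`) form a Hadamard matrix of order `2(p+1)`. -/
theorem NV_contains_Hadamard (p : ℕ) [Fact p.Prime] (hp : p % 24 = 5)
    (a : ℤ) (ha : a = 1 ∨ a = -1) :
    ∃ c : NVIdx p → (NVIdx p → ZMod 3),
      Function.Injective c ∧
      (∀ i, c i ∈ NVcode p a) ∧
      (∀ i, wt (c i) = 2 * (p + 1)) ∧
      IsHadamard (2 * (p + 1)) (Matrix.of fun i j => rho (c i j)) := by
  have hp8 : p % 8 = 5 := by omega
  have hH := isHadamard_Hnv hp8 ha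
  have hrho (i j : NVIdx p) : rho (Hnv p a i j) = Hnv p a i j := rho_intCast (hH.1 i j)
  refine ⟨(Hnv p a).map Int.cast, fun i j hij => ?_, Hnv_map_intCast_mem_NVcode a,
    fun i => ?_, ?_⟩
  · refine hH.injective (by omega) (funext fun k => ?_)
    rw [← hrho i k, ← hrho j k]
    exact congrArg rho (congrFun hij k)
  · change wt (fun j => ((Hnv p a i j : ℤ) : ZMod 3)) = _
    rw [wt_intCast (hH.1 i), Fintype.card_sum, Fintype.card_option, ZMod.card]
    ring
  · convert hH using 1
    ext i j
    exact hrho i j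
end

section
/- Let p be a prime with p ≡ 5 (mod 24) and let a ∈ {1,−1}. Then every row of the matrix H_{NV^(a)(p)}, when reduced modulo 3 (identifying the integers 1 and −1 with the elements 1 and 2 of 𝔽₃), is a codeword of the ternary code NV^(a)(p), and each such codeword has weight 2(p+1). -/
/-!
`Hnv = fromBlocks 1 1 (-1) 1 * (a • 1 + B_w)`, so every row of `Hnv` is a sum or difference of
two rows of the generator matrix and hence a codeword.

For `p ≡ 5 (mod 8)` the element `-2` is a nonsquare, so for `x ≠ y` exactly one of `y - x` and
`2 * (x - y) = -2 * (y - x)` is a square: exactly one of `(R_X)_{x,y}` and `(R_Y)_{y,x}` is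
nonzero, and it is `±1`. Hence every entry of `Hnv` is `±1`, nonzero modulo 3.
-/

open Matrix

theorem isSquare_mul_iff_of_not_isSquare {F : Type*} [Field F] [Fintype F] [DecidableEq F]
    {a b : F} (ha : ¬IsSquare a) (hb : b ≠ 0) : IsSquare (a * b) ↔ ¬IsSquare b := by
  have ha0 : a ≠ 0 := fun h => ha (h ▸ IsSquare.zero)
  rw [← quadraticChar_one_iff_isSquare (mul_ne_zero ha0 hb),
    ← quadraticChar_neg_one_iff_not_isSquare, map_mul,
    quadraticChar_neg_one_iff_not_isSquare.mpr ha]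
  constructor <;> intro h <;> linarith

theorem Matrix.mul_row_mem_span_rows {R m n : Type*} [CommSemiring R] [Fintype m]
    (M : Matrix n m R) (G : Matrix m n R) (i : n) :
    (M * G) i ∈ Submodule.span R (Set.range G.row) := by
  rw [Matrix.mul_apply_eq_vecMul, ← range_vecMulLinear]
  exact ⟨M i, rfl⟩

theorem wt_eq_card {ι : Type*} [Fintype ι] {v : ι → ZMod 3} (hv : ∀ i, v i ≠ 0) :
    wt v = Fintype.card ι := by
  rw [wt, Finset.filter_true_of_mem fun i _ => hv i, Finset.card_univ]

section

variable {p : ℕ} [Fact p.Prime]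

/-- `χ(c)` for `c² = u`, where `0` stands for "`u` is zero or not a square". -/
def quarticSign (u : ZMod p) : ℤ :=
  if ∃ c : ZMod p, c ≠ 0 ∧ c ^ 2 = u ∧ ∃ d : ZMod p, d ^ 2 = c then 1
  else if ∃ c : ZMod p, c ≠ 0 ∧ c ^ 2 = u then -1
  else 0

theorem RX_apply (x y : ZMod p) : RX p x y = quarticSign (y - x) := rfl

theorem RY_apply (x y : ZMod p) : RY p x y = quarticSign (2 * (y - x)) := rfl

theorem quarticSign_eq_zero {u : ZMod p} (h : ¬(u ≠ 0 ∧ IsSquare u)) : quarticSign u = 0 := by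
  have : ¬∃ c : ZMod p, c ≠ 0 ∧ c ^ 2 = u := by
    rintro ⟨c, hc, rfl⟩
    exact h ⟨pow_ne_zero 2 hc, c, sq c⟩
  rw [quarticSign, if_neg fun ⟨c, hc, hcu, _⟩ => this ⟨c, hc, hcu⟩, if_neg this]

theorem isUnit_quarticSign {u : ZMod p} (hu : u ≠ 0) (h : IsSquare u) :
    IsUnit (quarticSign u) := by
  obtain ⟨c, rfl⟩ := h
  have hc : c ≠ 0 := left_ne_zero_of_mul hu
  unfold quarticSign
  split_ifs with _ hsq
  exacts [isUnit_one, isUnit_one.neg, absurd ⟨c, hc, sq c⟩ hsq]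

theorem quarticSign_zero : quarticSign (0 : ZMod p) = 0 :=
  quarticSign_eq_zero fun h => h.1 rfl

theorem isSquare_two_mul_sub_iff (hp : p % 8 = 5) {x y : ZMod p} (hxy : x ≠ y) :
    IsSquare (2 * (x - y)) ↔ ¬IsSquare (y - x) := by
  have hneg2 : ¬IsSquare (-2 : ZMod p) := by
    rw [ZMod.exists_sq_eq_neg_two_iff (by omega)]
    omega
  rw [show 2 * (x - y) = -2 * (y - x) by ring]
  exact isSquare_mul_iff_of_not_isSquare hneg2 (sub_ne_zero.mpr hxy.symm)

theorem RX_RY_complementary (hp : p % 8 = 5) {x y : ZMod p} (hxy : x ≠ y) :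
    (IsUnit (RX p x y) ∧ RY p y x = 0) ∨ (RX p x y = 0 ∧ IsUnit (RY p y x)) := by
  have h2 : (2 : ZMod p) ≠ 0 := Ring.two_ne_zero (by rw [ZMod.ringChar_zmod_n]; omega)
  rw [RX_apply, RY_apply]
  by_cases h : IsSquare (y - x)
  · exact .inl ⟨isUnit_quarticSign (sub_ne_zero.mpr hxy.symm) h,
      quarticSign_eq_zero fun h' => (isSquare_two_mul_sub_iff hp hxy).mp h'.2 h⟩
  · exact .inr ⟨quarticSign_eq_zero fun h' => h h'.2,
      isUnit_quarticSign (mul_ne_zero h2 (sub_ne_zero.mpr hxy))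
        ((isSquare_two_mul_sub_iff hp hxy).mpr h)⟩

theorem isUnit_RX_add_RY (hp : p % 8 = 5) {x y : ZMod p} (hxy : x ≠ y) :
    IsUnit (RX p x y + RY p y x) ∧ IsUnit (RX p x y - RY p y x) := by
  rcases RX_RY_complementary hp hxy with ⟨hu, hv⟩ | ⟨hu, hv⟩
  · simpa [hv] using hu
  · simpa [hu] using hv

theorem RX_self (x : ZMod p) : RX p x x = 0 := by
  rw [RX_apply, sub_self, quarticSign_zero]

theorem RY_self (x : ZMod p) : RY p x x = 0 := by
  rw [RY_apply, sub_self, mul_zero, quarticSign_zero]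

theorem isUnit_Hnv_apply (hp : p % 8 = 5) {a : ℤ} (ha : IsUnit a) (i j : NVIdx p) :
    IsUnit (Hnv p a i j) := by
  rcases i with (_ | x) | (_ | x) <;> rcases j with (_ | y) | (_ | y) <;>
    simp only [Hnv, fromBlocks_apply₁₁, fromBlocks_apply₁₂, fromBlocks_apply₂₁,
      fromBlocks_apply₂₂, Matrix.add_apply, Matrix.sub_apply, Matrix.neg_apply,
      Matrix.smul_apply, transpose_apply, one_apply, Xmat, Ymat, of_apply, smul_eq_mul,
      Option.some.injEq, reduceCtorEq, if_false, if_true, mul_one, mul_zero, sub_zero, add_zero,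
      zero_add, neg_zero, zero_sub]
  all_goals first
    | obtain rfl | hxy := eq_or_ne x y
      · simp [RX_self, RY_self, ha]
      · obtain ⟨hadd, hsub⟩ := isUnit_RX_add_RY hp hxy
        obtain ⟨hadd', hsub'⟩ := isUnit_RX_add_RY hp hxy.symm
        simp only [if_neg hxy, mul_zero, add_zero, sub_zero]
        first
          | exact hsub
          | exact hsub'
          | rwa [add_comm]
          | rw [← neg_add', add_comm]; exact hadd.neg
    | simp [ha]

theorem Hnv_eq_mul (a : ℤ) : Hnv p a = fromBlocks 1 1 (-1) 1 * NVgen p a := by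
  rw [NVgen, Bw, ← fromBlocks_one, fromBlocks_smul, fromBlocks_add, fromBlocks_multiply, Hnv]
  congr 1 <;> simp only [Matrix.one_mul, Matrix.neg_mul, smul_zero, zero_add] <;> abel

end

/-- for a prime `p ≡ 5 (mod 24)` and `a ∈ {1, -1}`, every row of `H_{NV^(a)(p)}`
reduced modulo 3 is a codeword of `NV^(a)(p)` of weight `2(p+1)`. -/
theorem Hnv_rows_are_codewords (p : ℕ) [Fact p.Prime] (hp : p % 24 = 5)
    (a : ℤ) (ha : a = 1 ∨ a = -1) (i : NVIdx p) :
    (fun j => ((Hnv p a i j : ℤ) : ZMod 3)) ∈ NVcode p a ∧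
      wt (fun j => ((Hnv p a i j : ℤ) : ZMod 3)) = 2 * (p + 1) := by
  let cast3 := Int.castRingHom (ZMod 3)
  constructor
  · have := ((fromBlocks 1 1 (-1) 1 : Matrix (NVIdx p) (NVIdx p) ℤ).map cast3)
      |>.mul_row_mem_span_rows ((NVgen p a).map cast3) i
    rwa [← Matrix.map_mul, ← Hnv_eq_mul] at this
  · have hne (j : NVIdx p) : ((Hnv p a i j : ℤ) : ZMod 3) ≠ 0 :=
      ((isUnit_Hnv_apply (by omega) (Int.isUnit_iff.mpr ha) i j).map cast3).ne_zero
    rw [wt_eq_card hne, Fintype.card_sum, Fintype.card_option, ZMod.card]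
    ring
end

section
/- Let p be a prime with p ≡ 5 (mod 8). Then the (p+1)×(p+1) integer matrices X and Y satisfy X² + Y² = −p · I_{p+1}. -/
/-!
Write `η(t) = χ(c)` when `t = c²` with `c ≠ 0` (well defined because `χ(-1) = 1`) and `η(t) = 0`
otherwise (`sqrtChar`), so that `R_X(a, b) = η(b - a)` and `R_Y(a, b) = η(2(b - a))`. The `(a, b)`
entry of `R_X² + R_Y²` is `S(d) + S(2d)`, where `d = b - a` and `S(d) = ∑ₓ η(x) η(d - x)`
(`sqrtCharConv`). As `2η(t) = ∑_{c² = t} χ(c)`, we have `4 S(d) = T(d)`, where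
`T(d) = ∑_{c² + e² = d} χ(c) χ(e)` (`twoSquaresCharSum`) satisfies `T(u² d) = T(d)` for `u ≠ 0`.
Since `2` is not a square, `T(d) + T(2d) = T(1) + T(2)` for all `d ≠ 0`. Summing over `d`, with
`∑_d T(d) = 0` and `T(0) = -2(p - 1)` (a square root of `-1` is not a square), gives
`T(1) + T(2) = 4`. Hence `S(d) + S(2d)` is `1` for `d ≠ 0` and `1 - p` for `d = 0`, and the border
of `X` adds `-1` on the block; its products with the block vanish because `∑ₜ η(t) = 0`.
-/

open Matrix

lemma sum_compl_singleton_const {α : Type*} [Fintype α] [DecidableEq α] (a : α) (n : ℤ) :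
    ∑ _x ∈ ({a}ᶜ : Finset α), n = (Fintype.card α - 1) * n := by
  rw [Finset.sum_const, Finset.card_compl, Finset.card_singleton, nsmul_eq_mul,
    Nat.cast_sub (Fintype.card_pos_iff.mpr ⟨a⟩), Nat.cast_one]

section SquareRootCharacter

variable {F : Type*} [Field F] [Fintype F]

lemma ringChar_ne_two_of_not_isSquare_two (htwo : ¬IsSquare (2 : F)) : ringChar F ≠ 2 :=
  fun h => htwo (FiniteField.isSquare_of_char_two h 2)

variable [DecidableEq F]

local notation "χ" => quadraticChar F

def sqrtChar (t : F) : ℤ :=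
  if ∃ c : F, c ≠ 0 ∧ c ^ 2 = t ∧ ∃ d : F, d ^ 2 = c then 1
  else if ∃ c : F, c ≠ 0 ∧ c ^ 2 = t then -1
  else 0

/-- Since `-1` is a square, `c` and `-c` are squares together. -/
lemma sqrtChar_sq (hneg : IsSquare (-1 : F)) {c : F} (hc : c ≠ 0) : sqrtChar (c ^ 2) = χ c := by
  have hsq_iff : (∃ c' : F, c' ≠ 0 ∧ c' ^ 2 = c ^ 2 ∧ ∃ d : F, d ^ 2 = c') ↔ IsSquare c := by
    constructor
    · rintro ⟨c', -, hc', d, rfl⟩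
      rcases sq_eq_sq_iff_eq_or_eq_neg.mp hc' with h | h
      · exact ⟨d, by rw [← h, sq]⟩
      · obtain ⟨r, hr⟩ := hneg
        exact ⟨r * d, by rw [← neg_neg c, ← h, neg_eq_neg_one_mul, hr]; ring⟩
    · rintro ⟨d, rfl⟩
      exact ⟨d * d, hc, rfl, d, sq d⟩
  unfold sqrtChar
  by_cases hsq : IsSquare c
  · rw [if_pos (hsq_iff.mpr hsq), (quadraticChar_one_iff_isSquare hc).mpr hsq]
  · rw [if_neg (mt hsq_iff.mp hsq), if_pos ⟨c, hc, rfl⟩,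
      quadraticChar_neg_one_iff_not_isSquare.mpr hsq]

lemma sqrtChar_eq_zero {t : F} (ht : ¬∃ c : F, c ≠ 0 ∧ c ^ 2 = t) : sqrtChar t = 0 := by
  unfold sqrtChar
  rw [if_neg fun ⟨c, hc, hct, _⟩ => ht ⟨c, hc, hct⟩, if_neg ht]

lemma sum_ite_sq_eq_sq (hF : ringChar F ≠ 2) {a : F} (ha : a ≠ 0) (f : F → ℤ) :
    ∑ c : F, (if c ^ 2 = a ^ 2 then f c else 0) = f a + f (-a) := by
  have hroots : Finset.univ.filter (fun c : F => c ^ 2 = a ^ 2) = {a, -a} := by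
    ext c
    simp [sq_eq_sq_iff_eq_or_eq_neg]
  rw [← Finset.sum_filter, hroots, Finset.sum_pair]
  intro h
  exact ha ((mul_eq_zero.mp (show (2 : F) * a = 0 by linear_combination h)).resolve_left
    (Ring.two_ne_zero hF))

lemma two_mul_sqrtChar (hF : ringChar F ≠ 2) (hneg : IsSquare (-1 : F)) (t : F) :
    2 * sqrtChar t = ∑ c : F, if c ^ 2 = t then χ c else 0 := by
  by_cases ht : ∃ c : F, c ≠ 0 ∧ c ^ 2 = t
  · obtain ⟨c, hc, rfl⟩ := ht
    rw [sum_ite_sq_eq_sq hF hc, sqrtChar_sq hneg hc, neg_eq_neg_one_mul, map_mul,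
      (quadraticChar_one_iff_isSquare (neg_ne_zero.mpr one_ne_zero)).mpr hneg]
    ring
  · rw [sqrtChar_eq_zero ht, mul_zero]
    refine (Finset.sum_eq_zero fun c _ => ?_).symm
    split_ifs with hct
    · by_cases hc : c = 0
      · rw [hc, quadraticChar_zero]
      · exact absurd ⟨c, hc, hct⟩ ht
    · rfl

lemma sum_sqrtChar (hF : ringChar F ≠ 2) (hneg : IsSquare (-1 : F)) :
    ∑ t : F, sqrtChar t = 0 := by
  have h : 2 * ∑ t : F, sqrtChar t = 0 := by
    simp_rw [Finset.mul_sum, two_mul_sqrtChar hF hneg]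
    rw [Finset.sum_comm]
    simp only [Finset.sum_ite_eq, Finset.mem_univ, if_true]
    exact quadraticChar_sum_zero hF
  simpa using h

lemma sum_sqrtChar_sub_left (hF : ringChar F ≠ 2) (hneg : IsSquare (-1 : F)) (b : F) :
    ∑ a : F, sqrtChar (b - a) = 0 :=
  ((Equiv.subLeft b).sum_comp sqrtChar).trans (sum_sqrtChar hF hneg)

lemma sum_sqrtChar_sub_right (hF : ringChar F ≠ 2) (hneg : IsSquare (-1 : F)) (a : F) :
    ∑ b : F, sqrtChar (b - a) = 0 :=
  ((Equiv.subRight a).sum_comp sqrtChar).trans (sum_sqrtChar hF hneg)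

def sqrtCharConv (d : F) : ℤ := ∑ x : F, sqrtChar x * sqrtChar (d - x)

def twoSquaresCharSum (d : F) : ℤ :=
  ∑ c : F, ∑ e : F, if c ^ 2 + e ^ 2 = d then χ c * χ e else 0

lemma sum_sqrtChar_mul_sqrtChar {k : F} (hk : k ≠ 0) (a b : F) :
    ∑ c : F, sqrtChar (k * (c - a)) * sqrtChar (k * (b - c)) = sqrtCharConv (k * (b - a)) := by
  refine Fintype.sum_equiv ((Equiv.subRight a).trans (Equiv.mulLeft₀ k hk)) _ _ fun c => ?_
  simp only [Equiv.trans_apply, Equiv.subRight_apply, Equiv.mulLeft₀_apply]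
  ring_nf

lemma four_mul_sqrtCharConv (hF : ringChar F ≠ 2) (hneg : IsSquare (-1 : F)) (d : F) :
    4 * sqrtCharConv d = twoSquaresCharSum d := by
  calc 4 * sqrtCharConv d = ∑ x : F, (2 * sqrtChar x) * (2 * sqrtChar (d - x)) := by
        rw [sqrtCharConv, Finset.mul_sum]; ring_nf
    _ = ∑ c : F, ∑ e : F, ∑ x : F,
          if c ^ 2 = x then (if e ^ 2 = d - x then χ c * χ e else 0) else 0 := by
        simp_rw [two_mul_sqrtChar hF hneg, Finset.sum_mul_sum, ite_mul, mul_ite, zero_mul,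
          mul_zero, ite_self]
        rw [Finset.sum_comm]
        exact Finset.sum_congr rfl fun c _ => Finset.sum_comm
    _ = twoSquaresCharSum d := by
        simp only [Finset.sum_ite_eq, Finset.mem_univ, if_true, twoSquaresCharSum,
          eq_sub_iff_add_eq, add_comm]

lemma twoSquaresCharSum_sq_mul {u : F} (hu : u ≠ 0) (m : F) :
    twoSquaresCharSum (u ^ 2 * m) = twoSquaresCharSum m := by
  have hχu : χ u * χ u = 1 := by rw [← sq, quadraticChar_sq_one hu]
  unfold twoSquaresCharSum
  rw [← Equiv.sum_comp (Equiv.mulLeft₀ u hu)]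
  refine Finset.sum_congr rfl fun c _ => ?_
  rw [← Equiv.sum_comp (Equiv.mulLeft₀ u hu)]
  refine Finset.sum_congr rfl fun e _ => ?_
  have hiff : (u * c) ^ 2 + (u * e) ^ 2 = u ^ 2 * m ↔ c ^ 2 + e ^ 2 = m := by
    rw [show (u * c) ^ 2 + (u * e) ^ 2 = u ^ 2 * (c ^ 2 + e ^ 2) by ring,
      mul_right_inj' (pow_ne_zero 2 hu)]
  simp only [Equiv.mulLeft₀_apply, hiff, map_mul]
  split_ifs
  · linear_combination χ c * χ e * hχu
  · rfl

lemma sum_twoSquaresCharSum (hF : ringChar F ≠ 2) : ∑ d : F, twoSquaresCharSum d = 0 := by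
  unfold twoSquaresCharSum
  rw [Finset.sum_comm, Finset.sum_congr rfl fun c _ => Finset.sum_comm]
  simp only [Finset.sum_ite_eq, Finset.mem_univ, if_true]
  rw [← Finset.sum_mul_sum, quadraticChar_sum_zero hF, zero_mul]

/-- A square root `r` of `-1` is not a square, because `(1 + r) ^ 2 = 2 r`. -/
lemma twoSquaresCharSum_zero (hneg : IsSquare (-1 : F)) (htwo : ¬IsSquare (2 : F)) :
    twoSquaresCharSum (0 : F) = -2 * (Fintype.card F - 1) := by
  have hF := ringChar_ne_two_of_not_isSquare_two htwo
  obtain ⟨r, hr⟩ := hneg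
  have hr0 : r ≠ 0 := by rintro rfl; simp at hr
  have hχr : χ r = -1 := by
    refine quadraticChar_neg_one_iff_not_isSquare.mpr fun ⟨s, hs⟩ => htwo ⟨(1 + r) / s, ?_⟩
    have hs0 : s ≠ 0 := by rintro rfl; simp [hs] at hr0
    field_simp
    linear_combination (-2) * hs + hr
  have hχneg : χ (-1) = 1 :=
    (quadraticChar_one_iff_isSquare (neg_ne_zero.mpr one_ne_zero)).mpr ⟨r, hr⟩
  have hinner (c : F) : (∑ e : F, if c ^ 2 + e ^ 2 = 0 then χ c * χ e else 0)
      = if c = 0 then 0 else -2 := by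
    split_ifs with hc
    · simp [hc]
    · have hroots (e : F) : c ^ 2 + e ^ 2 = 0 ↔ e ^ 2 = (r * c) ^ 2 := by
        rw [mul_pow, sq r, ← hr]
        constructor <;> intro h <;> linear_combination h
      simp_rw [hroots, sum_ite_sq_eq_sq hF (mul_ne_zero hr0 hc), neg_eq_neg_one_mul (r * c),
        map_mul, hχr, hχneg]
      linear_combination -2 * quadraticChar_sq_one hc
  rw [twoSquaresCharSum, Finset.sum_congr rfl fun c _ => hinner c,
    Fintype.sum_eq_add_sum_compl 0, if_pos rfl,
    Finset.sum_congr rfl fun c hc => if_neg (Finset.mem_compl.mp hc ∘ Finset.mem_singleton.mpr),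
    sum_compl_singleton_const]
  ring

lemma twoSquaresCharSum_add_two_mul (htwo : ¬IsSquare (2 : F)) {d : F} (hd : d ≠ 0) :
    twoSquaresCharSum d + twoSquaresCharSum (2 * d) =
      twoSquaresCharSum (1 : F) + twoSquaresCharSum (2 : F) := by
  have h2 : (2 : F) ≠ 0 := Ring.two_ne_zero (ringChar_ne_two_of_not_isSquare_two htwo)
  by_cases hsq : IsSquare d
  · obtain ⟨u, rfl⟩ := hsq
    have hu : u ≠ 0 := by rintro rfl; simp at hd
    rw [show u * u = u ^ 2 * 1 by ring, show 2 * (u ^ 2 * 1) = u ^ 2 * 2 by ring,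
      twoSquaresCharSum_sq_mul hu, twoSquaresCharSum_sq_mul hu]
  · have h2d : IsSquare (2 * d) := by
      rw [← quadraticChar_one_iff_isSquare (mul_ne_zero h2 hd), map_mul,
        quadraticChar_neg_one_iff_not_isSquare.mpr htwo,
        quadraticChar_neg_one_iff_not_isSquare.mpr hsq]
      norm_num
    obtain ⟨v, hv⟩ := h2d
    have hv0 : v ≠ 0 := by rintro rfl; simp_all
    rw [show d = (v / 2) ^ 2 * 2 by field_simp; linear_combination hv,
      show 2 * ((v / 2) ^ 2 * 2) = v ^ 2 * 1 by field_simp,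
      twoSquaresCharSum_sq_mul hv0, twoSquaresCharSum_sq_mul (div_ne_zero hv0 h2), add_comm]

lemma twoSquaresCharSum_one_add_two (hneg : IsSquare (-1 : F)) (htwo : ¬IsSquare (2 : F)) :
    twoSquaresCharSum (1 : F) + twoSquaresCharSum (2 : F) = 4 := by
  have hF := ringChar_ne_two_of_not_isSquare_two htwo
  have hdouble : ∑ d : F, twoSquaresCharSum (2 * d) = ∑ d : F, twoSquaresCharSum d :=
    Equiv.sum_comp (Equiv.mulLeft₀ 2 (Ring.two_ne_zero hF)) twoSquaresCharSum
  have hsum : ∑ d : F, (twoSquaresCharSum d + twoSquaresCharSum (2 * d)) = 0 := by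
    rw [Finset.sum_add_distrib, hdouble, sum_twoSquaresCharSum hF, add_zero]
  rw [Fintype.sum_eq_add_sum_compl 0, mul_zero, twoSquaresCharSum_zero hneg htwo,
    Finset.sum_congr rfl fun d hd => twoSquaresCharSum_add_two_mul htwo
      (Finset.mem_compl.mp hd ∘ Finset.mem_singleton.mpr), sum_compl_singleton_const] at hsum
  have hq : (Fintype.card F : ℤ) - 1 ≠ 0 :=
    sub_ne_zero.mpr (by exact_mod_cast Fintype.one_lt_card.ne')
  refine mul_left_cancel₀ hq ?_
  linear_combination hsum

lemma sqrtCharConv_add_two_mul (hneg : IsSquare (-1 : F)) (htwo : ¬IsSquare (2 : F)) (d : F) :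
    sqrtCharConv d + sqrtCharConv (2 * d) = if d = 0 then 1 - (Fintype.card F : ℤ) else 1 := by
  have hF := ringChar_ne_two_of_not_isSquare_two htwo
  have h4 : 4 * (sqrtCharConv d + sqrtCharConv (2 * d))
      = twoSquaresCharSum d + twoSquaresCharSum (2 * d) := by
    rw [mul_add, four_mul_sqrtCharConv hF hneg, four_mul_sqrtCharConv hF hneg]
  split_ifs with hd
  · subst hd
    rw [mul_zero, twoSquaresCharSum_zero hneg htwo] at h4
    rw [mul_zero]
    linarith
  · rw [twoSquaresCharSum_add_two_mul htwo hd, twoSquaresCharSum_one_add_two hneg htwo] at h4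
    linarith

end SquareRootCharacter

lemma RX_apply_s4 {p : ℕ} [Fact p.Prime] (a b : ZMod p) : RX p a b = sqrtChar (b - a) := rfl

lemma RY_apply_s4 {p : ℕ} [Fact p.Prime] (a b : ZMod p) : RY p a b = sqrtChar (2 * (b - a)) := rfl

/-- for a prime `p ≡ 5 (mod 8)`, the matrices `X` and `Y` satisfy
`X² + Y² = -p I`. -/
theorem Xmat_sq_add_Ymat_sq (p : ℕ) [Fact p.Prime] (hp : p % 8 = 5) :
    Xmat p ^ 2 + Ymat p ^ 2 = (-(p : ℤ)) • (1 : Matrix (Option (ZMod p)) (Option (ZMod p)) ℤ) := by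
  have hneg : IsSquare (-1 : ZMod p) := ZMod.exists_sq_eq_neg_one_iff.mpr (by omega)
  have htwo : ¬IsSquare (2 : ZMod p) := by rw [FiniteField.isSquare_two_iff, ZMod.card]; omega
  have hF := ringChar_ne_two_of_not_isSquare_two htwo
  ext (_ | a) (_ | b)
  · simp [sq, Matrix.mul_apply, Fintype.sum_option, Xmat, Ymat]
  · simp [sq, Matrix.mul_apply, Fintype.sum_option, Xmat, Ymat, RX_apply_s4,
      sum_sqrtChar_sub_left hF hneg]
  · simp [sq, Matrix.mul_apply, Fintype.sum_option, Xmat, Ymat, RX_apply_s4,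
      sum_sqrtChar_sub_right hF hneg]
  · have hX := sum_sqrtChar_mul_sqrtChar (one_ne_zero' (ZMod p)) a b
    have hY := sum_sqrtChar_mul_sqrtChar (Ring.two_ne_zero hF) a b
    simp only [one_mul] at hX
    simp only [sq, Matrix.add_apply, Matrix.mul_apply, Fintype.sum_option, Xmat, Ymat,
      Matrix.of_apply, RX_apply_s4, RY_apply_s4, hX, hY, Matrix.smul_apply, Matrix.one_apply, mul_zero,
      zero_add, mul_one]
    rw [add_assoc, sqrtCharConv_add_two_mul hneg htwo, ZMod.card]
    by_cases hab : a = b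
    · simp only [hab, sub_self, if_true, smul_eq_mul, mul_one]
      ring
    · simp [hab, sub_eq_zero, Ne.symm hab]
end

section
/- Let F be a field, let m be a positive integer, and let H be a 2m × 2m matrix over F. If H + Hᵀ is invertible and H Hᵀ = 0, then the rank of H equals m. -/
open Matrix

namespace Matrix

variable {m n R : Type*} [Field R]

theorem rank_add_le [Finite m] [Fintype n] (A B : Matrix m n R) :
    (A + B).rank ≤ A.rank + B.rank := by
  rw [rank, rank, rank, mulVecLin_add]
  calc Module.finrank R (LinearMap.range (A.mulVecLin + B.mulVecLin))
      ≤ Module.finrank R ↥(LinearMap.range A.mulVecLin ⊔ LinearMap.range B.mulVecLin) := by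
        apply Submodule.finrank_mono
        rintro _ ⟨x, rfl⟩
        exact Submodule.add_mem_sup (LinearMap.mem_range_self _ x) (LinearMap.mem_range_self _ x)
    _ ≤ _ := Submodule.finrank_add_le_finrank_add_finrank _ _

/-- `H Hᵀ = 0` bounds `2 rank H` above by the size, and invertibility of `H + Hᵀ` bounds it
below through subadditivity of the rank. -/
theorem two_mul_rank_eq_card_of_isUnit_add_transpose_of_mul_transpose_eq_zero
    [Fintype n] [DecidableEq n] {H : Matrix n n R} (hunit : IsUnit (H + Hᵀ))
    (hzero : H * Hᵀ = 0) : 2 * H.rank = Fintype.card n := by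
  have upper : H.rank + H.rank ≤ Fintype.card n := by
    simpa only [rank_transpose] using rank_add_rank_le_card_of_mul_eq_zero hzero
  have lower : Fintype.card n ≤ H.rank + H.rank :=
    calc Fintype.card n = (H + Hᵀ).rank := (rank_of_isUnit _ hunit).symm
      _ ≤ H.rank + Hᵀ.rank := rank_add_le _ _
      _ = H.rank + H.rank := by rw [rank_transpose]
  omega

end Matrix

theorem rank_eq_of_add_transpose_isUnit_of_mul_transpose_eq_zero_general
    (F : Type*) [Field F] (m : ℕ) (H : Matrix (Fin (2 * m)) (Fin (2 * m)) F)
    (h1 : IsUnit (H + Hᵀ)) (h2 : H * Hᵀ = 0) :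
    H.rank = m := by
  have := two_mul_rank_eq_card_of_isUnit_add_transpose_of_mul_transpose_eq_zero h1 h2
  rw [Fintype.card_fin] at this
  omega

/-- if `H` is a `2m × 2m` matrix over a field `F` (with `m` a positive integer)
such that `H + Hᵀ` is invertible and `H Hᵀ = 0`, then the rank of `H` equals `m`. -/
theorem rank_eq_of_add_transpose_isUnit_of_mul_transpose_eq_zero
    (F : Type*) [Field F] (m : ℕ) (hm : 0 < m) (H : Matrix (Fin (2 * m)) (Fin (2 * m)) F)
    (h1 : IsUnit (H + Hᵀ)) (h2 : H * Hᵀ = 0) :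
    H.rank = m :=
  rank_eq_of_add_transpose_isUnit_of_mul_transpose_eq_zero_general F m H h1 h2
end

section
/- Let G be an additively written finite abelian group of order v = 2m + 1, and let D₁, D₂ be (2m+1, m, m−1) supplementary difference sets in G. Fix an ordering of the elements of G and let M₁ and M₂ be the type-1 matrices of D₁ and D₂ respectively. Then the (2v+2) × (2v+2) matrix H(D₁,D₂) = [[1, 1, 𝟙_v, −𝟙_v], [−1, 1, −𝟙_v, −𝟙_v], [−𝟙_vᵀ, 𝟙_vᵀ, −M₁, −M₂], [𝟙_vᵀ, 𝟙_vᵀ, M₂ᵀ, −M₁ᵀ]] is a Hadamard matrix of order 4(m+1), where 𝟙_v denotes the all-one row vector of length v. -/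
open Matrix

/-- `D₁`, `D₂` are `(v, k, λ)` supplementary difference sets in `G`: `G` has order `v`,
`|D₁| = |D₂| = k`, and every nonzero `g ∈ G` is represented exactly `λ` times as a
difference `x - y` with `x, y ∈ Dᵢ`, counting over both `i = 1, 2`. -/
def IsSDS {G : Type*} [AddCommGroup G] [Fintype G] [DecidableEq G]
    (v k lam : ℕ) (D₁ D₂ : Finset G) : Prop :=
  Fintype.card G = v ∧ D₁.card = k ∧ D₂.card = k ∧
    ∀ g : G, g ≠ 0 →
      ((D₁ ×ˢ D₁).filter fun xy => xy.1 - xy.2 = g).card +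
        ((D₂ ×ˢ D₂).filter fun xy => xy.1 - xy.2 = g).card = lam

/-- The type-1 matrix of a subset `D ⊆ G` (for a fixed ordering of `G`, here the indexing of
rows and columns by `G` itself): entry `(i, j)` is `1` if `j - i ∈ D` and `-1` otherwise. -/
def type1 {G : Type*} [AddCommGroup G] [DecidableEq G] (D : Finset G) : Matrix G G ℤ :=
  Matrix.of fun i j => if j - i ∈ D then 1 else -1

/-- The matrix
`H(D₁,D₂) = [[1, 1, 𝟙, -𝟙], [-1, 1, -𝟙, -𝟙], [-𝟙ᵀ, 𝟙ᵀ, -M₁, -M₂], [𝟙ᵀ, 𝟙ᵀ, M₂ᵀ, -M₁ᵀ]]`,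
where `M₁`, `M₂` are the type-1 matrices of `D₁`, `D₂`. -/
def HSDS {G : Type*} [AddCommGroup G] [DecidableEq G] (D₁ D₂ : Finset G) :
    Matrix (Fin 2 ⊕ (G ⊕ G)) (Fin 2 ⊕ (G ⊕ G)) ℤ :=
  Matrix.fromBlocks
    !![1, 1; -1, 1]
    (Matrix.of fun i j =>
      if i = 0 then Sum.elim (fun _ => (1 : ℤ)) (fun _ => -1) j else -1)
    (Matrix.of fun i j =>
      Sum.elim (fun _ => if j = 0 then (-1 : ℤ) else 1) (fun _ => 1) i)
    (Matrix.fromBlocks (-(type1 D₁)) (-(type1 D₂)) (type1 D₂)ᵀ (-(type1 D₁)ᵀ))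

/-!
Write `H(D₁, D₂)` as a 2 × 2 block matrix with corner `[[1, 1], [-1, 1]]`, the all-ones border
rows and columns, and core `[[-M₁, -M₂], [M₂ᵀ, -M₁ᵀ]]`. Type-1 matrices over an abelian group
commute with each other, and `Mᵀ` is the type-1 matrix of `-D`, so the core times its transpose is
block diagonal with both blocks `M₁M₁ᵀ + M₂M₂ᵀ`, which the SDS condition makes `4(m+1)I - 2J`.
The row and column sums of `Mᵢ` are `2|Dᵢ| - v = -1`; this kills the off-diagonal blocks of
`H Hᵀ`, and the border columns supply the missing `2J`.
-/

open scoped Pointwise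

theorem sum_ite_mem_one_neg_one {α : Type*} [Fintype α] [DecidableEq α] (D : Finset α) :
    ∑ g, (if g ∈ D then (1 : ℤ) else -1) = 2 * D.card - Fintype.card α := by
  have h (g : α) : (if g ∈ D then (1 : ℤ) else -1) = 2 * (if g ∈ D then 1 else 0) - 1 := by
    split_ifs <;> norm_num
  simp [h, Finset.sum_sub_distrib, mul_comm]

section Type1

variable {G : Type*} [AddCommGroup G] [DecidableEq G]

/-- `IsSDS` asks `diffCount D₁ g + diffCount D₂ g = lam` for every `g ≠ 0`. -/
def diffCount (D : Finset G) (c : G) : ℕ :=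
  ((D ×ˢ D).filter fun xy => xy.1 - xy.2 = c).card

theorem diffCount_zero (D : Finset G) : diffCount D 0 = D.card := by
  simp_rw [diffCount, sub_eq_zero, ← Finset.diag_eq_filter, Finset.diag_card]

theorem type1_apply (D : Finset G) (i j : G) :
    type1 D i j = if j - i ∈ D then 1 else -1 := rfl

theorem type1_transpose (D : Finset G) : (type1 D)ᵀ = type1 (-D) := by
  ext i j
  simp only [transpose_apply, type1_apply, Finset.mem_neg', neg_sub]

variable [Fintype G]

theorem card_filter_sub_mem (D : Finset G) (k : G) :
    (Finset.univ.filter fun g => g - k ∈ D).card = D.card := by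
  refine Finset.card_nbij' (· - k) (· + k) ?_ ?_ ?_ ?_ <;>
    simp [Set.MapsTo, Set.LeftInvOn, Set.RightInvOn]

theorem card_filter_sub_mem_and_sub_mem (D : Finset G) (i j : G) :
    (Finset.univ.filter fun g => g - i ∈ D ∧ g - j ∈ D).card = diffCount D (j - i) := by
  refine Finset.card_nbij' (fun g => (g - i, g - j)) (fun xy => xy.2 + j) ?_ ?_ ?_ ?_ <;>
    simp +contextual [Set.MapsTo, Set.LeftInvOn, Set.RightInvOn, sub_eq_iff_eq_add',
      add_sub_assoc]
  grind

theorem type1_mul_comm (A B : Finset G) : type1 A * type1 B = type1 B * type1 A := by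
  ext i j
  simp only [mul_apply, type1_apply]
  exact Fintype.sum_equiv (Equiv.subLeft (i + j)) _ _ fun g => by
    rw [Equiv.subLeft_apply, mul_comm]; congr 3 <;> abel

theorem sum_type1_row (D : Finset G) (i : G) :
    ∑ j, type1 D i j = 2 * D.card - Fintype.card G := by
  rw [← sum_ite_mem_one_neg_one]
  exact Fintype.sum_equiv (Equiv.subRight i) _ _ fun g => rfl

theorem sum_type1_col (D : Finset G) (j : G) :
    ∑ i, type1 D i j = 2 * D.card - Fintype.card G := by
  rw [← Finset.card_neg, ← sum_type1_row (-D) j, ← type1_transpose]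
  rfl

theorem type1_mul_transpose_apply (D : Finset G) (i j : G) :
    (type1 D * (type1 D)ᵀ) i j = 4 * diffCount D (j - i) - 4 * D.card + Fintype.card G := by
  have expand (g : G) : type1 D i g * type1 D j g =
      4 * (if g - i ∈ D ∧ g - j ∈ D then 1 else 0) - 2 * (if g - i ∈ D then 1 else 0)
        - 2 * (if g - j ∈ D then 1 else 0) + 1 := by
    simp only [type1_apply]; split_ifs <;> simp_all
  simp only [mul_apply, transpose_apply, expand, Finset.sum_add_distrib, Finset.sum_sub_distrib,
    ← Finset.mul_sum, Finset.sum_boole, card_filter_sub_mem_and_sub_mem, card_filter_sub_mem,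
    Finset.sum_const, Finset.card_univ, Int.nsmul_eq_mul, mul_one]
  ring

end Type1

section SDS

variable {G : Type*} [AddCommGroup G] [Fintype G] [DecidableEq G] {D₁ D₂ : Finset G}

theorem IsSDS.type1_mul_transpose_add_apply {v k lam : ℕ} (h : IsSDS v k lam D₁ D₂) (i j : G) :
    (type1 D₁ * (type1 D₁)ᵀ + type1 D₂ * (type1 D₂)ᵀ) i j =
      if i = j then (2 * v : ℤ) else 4 * lam - 8 * k + 2 * v := by
  obtain ⟨hv, hk₁, hk₂, hlam⟩ := h
  rw [Matrix.add_apply, type1_mul_transpose_apply, type1_mul_transpose_apply, hk₁, hk₂, hv]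
  split_ifs with hij
  · simp only [hij, sub_self, diffCount_zero, hk₁, hk₂]; ring
  · have hcount : diffCount D₁ (j - i) + diffCount D₂ (j - i) = lam :=
      hlam (j - i) (sub_ne_zero.mpr (Ne.symm hij))
    rw [← hcount]; push_cast; ring

theorem IsSDS.type1_mul_transpose_add {m : ℕ} (h : IsSDS (2 * m + 1) m (m - 1) D₁ D₂) :
    type1 D₁ * (type1 D₁)ᵀ + type1 D₂ * (type1 D₂)ᵀ =
      (4 * (m + 1) : ℤ) • 1 - of fun _ _ => 2 := by
  ext i j
  rw [h.type1_mul_transpose_add_apply, Matrix.sub_apply, Matrix.smul_apply, one_apply, of_apply]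
  split_ifs with hij
  · push_cast; ring
  · -- `m - 1` is truncated subtraction; two distinct elements force `m ≥ 1`
    have : 2 ≤ 2 * m + 1 := h.1 ▸ Fintype.one_lt_card_iff_nontrivial.mpr ⟨i, j, hij⟩
    rw [Nat.cast_sub (by omega)]; push_cast; ring

end SDS

namespace HSDS

def corner : Matrix (Fin 2) (Fin 2) ℤ := !![1, 1; -1, 1]

def borderRows (G : Type*) : Matrix (Fin 2) (G ⊕ G) ℤ :=
  of fun i j => if i = 0 then Sum.elim (fun _ => (1 : ℤ)) (fun _ => -1) j else -1

def borderCols (G : Type*) : Matrix (G ⊕ G) (Fin 2) ℤ :=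
  of fun i j => Sum.elim (fun _ => if j = 0 then (-1 : ℤ) else 1) (fun _ => 1) i

theorem borderCols_mul_transpose (G : Type*) :
    borderCols G * (borderCols G)ᵀ = fromBlocks (of fun _ _ => 2) 0 0 (of fun _ _ => 2) := by
  ext (x | x) (y | y) <;> simp [borderCols, Matrix.mul_apply, Fin.sum_univ_two]

theorem corner_mul_transpose_add_borderRows_mul_transpose (G : Type*) [Fintype G] :
    corner * cornerᵀ + borderRows G * (borderRows G)ᵀ = (2 * Fintype.card G + 2 : ℤ) • 1 := by
  ext a b
  simp only [Matrix.add_apply, Matrix.mul_apply]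
  fin_cases a <;> fin_cases b <;>
    simp [corner, borderRows, Fintype.sum_sum_type, Fin.sum_univ_two] <;> ring

variable {G : Type*} [AddCommGroup G] [DecidableEq G]

def core (D₁ D₂ : Finset G) : Matrix (G ⊕ G) (G ⊕ G) ℤ :=
  fromBlocks (-type1 D₁) (-type1 D₂) (type1 D₂)ᵀ (-(type1 D₁)ᵀ)

theorem eq_fromBlocks (D₁ D₂ : Finset G) :
    HSDS D₁ D₂ = fromBlocks corner (borderRows G) (borderCols G) (core D₁ D₂) := rfl

theorem apply_eq_one_or_neg_one (D₁ D₂ : Finset G) (i j : Fin 2 ⊕ (G ⊕ G)) :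
    HSDS D₁ D₂ i j = 1 ∨ HSDS D₁ D₂ i j = -1 := by
  rw [← abs_eq zero_le_one]
  rcases i with a | g | g <;> rcases j with b | h | h
  · fin_cases a <;> fin_cases b <;> simp [HSDS]
  all_goals simp [HSDS, type1, apply_ite]

variable [Fintype G]

theorem core_mul_transpose (D₁ D₂ : Finset G) :
    core D₁ D₂ * (core D₁ D₂)ᵀ =
      fromBlocks (type1 D₁ * (type1 D₁)ᵀ + type1 D₂ * (type1 D₂)ᵀ) 0 0
        (type1 D₁ * (type1 D₁)ᵀ + type1 D₂ * (type1 D₂)ᵀ) := by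
  simp only [core, fromBlocks_transpose, fromBlocks_multiply, transpose_neg, transpose_transpose,
    neg_mul, mul_neg, neg_neg]
  rw [type1_transpose, type1_transpose, type1_mul_comm D₂ D₁, type1_mul_comm (-D₂) (-D₁),
    type1_mul_comm (-D₂) D₂, type1_mul_comm (-D₁) D₁, add_comm (type1 D₂ * _), neg_add_cancel,
    neg_add_cancel]

theorem corner_mul_borderCols_transpose_add_borderRows_mul_core_transpose {D₁ D₂ : Finset G}
    (h₁ : 2 * D₁.card + 1 = Fintype.card G) (h₂ : 2 * D₂.card + 1 = Fintype.card G) :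
    corner * (borderCols G)ᵀ + borderRows G * (core D₁ D₂)ᵀ = 0 := by
  have hsum (D : Finset G) (hD : 2 * D.card + 1 = Fintype.card G) :
      2 * (D.card : ℤ) - Fintype.card G = -1 := by
    rw [← hD]; push_cast; ring
  ext a (x | x) <;> simp only [Matrix.add_apply, Matrix.mul_apply] <;> fin_cases a <;>
    simp [corner, borderRows, borderCols, core, Fintype.sum_sum_type, Fin.sum_univ_two,
      Finset.sum_neg_distrib, sum_type1_col, sum_type1_row, hsum, h₁, h₂]

theorem borderCols_mul_transpose_add_core_mul_transpose {m : ℕ} {D₁ D₂ : Finset G}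
    (h : IsSDS (2 * m + 1) m (m - 1) D₁ D₂) :
    borderCols G * (borderCols G)ᵀ + core D₁ D₂ * (core D₁ D₂)ᵀ = (4 * (m + 1) : ℤ) • 1 := by
  rw [borderCols_mul_transpose, core_mul_transpose, h.type1_mul_transpose_add, fromBlocks_add,
    add_sub_cancel, add_zero, ← fromBlocks_one, fromBlocks_smul, smul_zero]

end HSDS

/-- if `D₁`, `D₂` are `(2m+1, m, m-1)` supplementary difference sets in a finite
abelian group `G` of order `v = 2m + 1`, then `H(D₁, D₂)` is a Hadamard matrix of order
`4(m+1) = 2v + 2`. -/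
theorem HSDS_isHadamard {G : Type*} [AddCommGroup G] [Fintype G] [DecidableEq G]
    (m : ℕ) (D₁ D₂ : Finset G) (h : IsSDS (2 * m + 1) m (m - 1) D₁ D₂) :
    IsHadamard (4 * (m + 1)) (HSDS D₁ D₂) := by
  have hD₁ : 2 * D₁.card + 1 = Fintype.card G := by rw [h.1, h.2.1]
  have hD₂ : 2 * D₂.card + 1 = Fintype.card G := by rw [h.1, h.2.2.1]
  have hOffDiag :=
    HSDS.corner_mul_borderCols_transpose_add_borderRows_mul_core_transpose hD₁ hD₂
  refine ⟨HSDS.apply_eq_one_or_neg_one D₁ D₂, ?_⟩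
  rw [HSDS.eq_fromBlocks, fromBlocks_transpose, fromBlocks_multiply, ← fromBlocks_one,
    fromBlocks_smul, smul_zero, smul_zero]
  push_cast
  refine fromBlocks_inj.mpr ⟨?_, hOffDiag, ?_, ?_⟩
  · rw [HSDS.corner_mul_transpose_add_borderRows_mul_transpose, h.1]; push_cast; ring_nf
  · simpa only [transpose_add, transpose_mul, transpose_transpose, transpose_zero]
      using congrArg transpose hOffDiag
  · exact HSDS.borderCols_mul_transpose_add_core_mul_transpose h
end
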